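/- There is a bijection between dispersed Dyck paths of length n and lattice paths from (0,0) to (n, -(n mod 2)) in ℤ×ℤ using only steps (+1,+1) and (+1,-1). -/

import Mathlib

inductive DStep | up | down | right
deriving DecidableEq, Repr

instance : Fintype DStep := ⟨{.up, .down, .right}, fun x => by cases x <;> simp⟩

/-- Run a dispersed Dyck path from height `h`; `none` if an illegal step occurs,
otherwise the final height. Down steps require positive height; right steps require height 0. -/
def DStep.run : ℕ → List DStep → Option ℕ
  | h, [] => some h
  | h, .up :: l => DStep.run (h + 1) l
  | h + 1, .down :: l => DStep.run h l
  | 0, .down :: _ => none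
  | 0, .right :: l => DStep.run 0 l
  | _ + 1, .right :: _ => none

/-- A dispersed Dyck path: starts and ends at height 0, all steps legal. -/
def IsDDP (l : List DStep) : Prop := DStep.run 0 l = some 0

instance : DecidablePred IsDDP := fun l => by unfold IsDDP; infer_instance

/-- The finset of all dispersed Dyck paths of length `n`. -/
def DDPs (n : ℕ) : Finset (List.Vector DStep n) :=
  Finset.univ.filter (fun v => IsDDP v.toList)

/-- Number of dispersed Dyck paths of length `n`. -/
def dD (n : ℕ) : ℕ := (DDPs n).card

/-- Total number of up steps over all DDPs of length `n`. -/
def U (n : ℕ) : ℕ := ∑ v ∈ DDPs n, v.toList.count DStep.up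

/-- Total number of down steps over all DDPs of length `n`. -/
def D (n : ℕ) : ℕ := ∑ v ∈ DDPs n, v.toList.count DStep.down

/-- Total number of right steps over all DDPs of length `n`. -/
def R (n : ℕ) : ℕ := ∑ v ∈ DDPs n, v.toList.count DStep.right

/-- `i` is the position of a 1-ascent in `l`: an up step with no adjacent up step. -/
def IsOneAscentAt (l : List DStep) (i : ℕ) : Prop :=
  l[i]? = some .up ∧ l[i + 1]? ≠ some .up ∧ (i = 0 ∨ l[i - 1]? ≠ some .up)

instance (l : List DStep) : DecidablePred (IsOneAscentAt l) := fun i => by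
  unfold IsOneAscentAt; infer_instance

/-- Number of 1-ascents in `l`. -/
def oneAsc (l : List DStep) : ℕ :=
  ((Finset.range l.length).filter (IsOneAscentAt l)).card

/-- Total number of 1-ascents over all DDPs of length `n`. -/
def A (n : ℕ) : ℕ := ∑ v ∈ DDPs n, oneAsc v.toList

/-- Signed final height of a plain path (ignoring any right steps). -/
def psum : List DStep → ℤ
  | [] => 0
  | .up :: l => 1 + psum l
  | .down :: l => -1 + psum l
  | .right :: l => psum l

/-!
Both sides are counted by lattice-path recurrences. Let `d(n, h)` count legal step sequences of
length `n` leading from height `h` down to `0`, and `p(n, k)` count up/down paths of length `n`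
ending at height `k`. Then `d(n, h) = p(n, -h - ((n + h) mod 2))` by induction on `n`: away from
height `0` both sides obey Pascal's rule, and at height `0` the right step takes the place of the
forbidden down step, which matches thanks to the reflection symmetry `p(n, -k) = p(n, k)`.
Equal finite cardinalities then give the bijection.
-/

section LengthCount

variable {α : Type*}

instance List.finite_subtype_length_eq [Finite α] (n : ℕ) (P : List α → Prop) :
    Finite {l : List α // l.length = n ∧ P l} :=
  ((List.finite_length_eq α n).subset fun _ hl => hl.1).to_subtype

def List.lengthSuccEquivSigma (n : ℕ) (P : List α → Prop) :
    {l : List α // l.length = n + 1 ∧ P l} ≃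
      Σ a, {l : List α // l.length = n ∧ P (a :: l)} where
  toFun
    | ⟨[], h⟩ => absurd h.1 (by simp)
    | ⟨a :: l, h⟩ => ⟨a, l, by simpa using h⟩
  invFun | ⟨a, l, h⟩ => ⟨a :: l, by simpa using h⟩
  left_inv
    | ⟨[], h⟩ => absurd h.1 (by simp)
    | ⟨_ :: _, _⟩ => rfl
  right_inv _ := rfl

theorem List.natCard_length_succ [Fintype α] (n : ℕ) (P : List α → Prop) :
    Nat.card {l : List α // l.length = n + 1 ∧ P l} =
      ∑ a, Nat.card {l : List α // l.length = n ∧ P (a :: l)} := by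
  rw [Nat.card_congr (List.lengthSuccEquivSigma n P), Nat.card_sigma]

theorem List.natCard_length_congr (n : ℕ) {P Q : List α → Prop} (h : ∀ l, P l ↔ Q l) :
    Nat.card {l : List α // l.length = n ∧ P l} =
      Nat.card {l : List α // l.length = n ∧ Q l} := by
  simp only [h]

theorem List.natCard_length_zero (P : List α → Prop) [Decidable (P [])] :
    Nat.card {l : List α // l.length = 0 ∧ P l} = if P [] then 1 else 0 := by
  simp only [List.length_eq_zero_iff]
  split_ifs with h
  · exact Nat.card_eq_one_iff_unique.mpr
      ⟨⟨fun a b => Subtype.ext (a.2.1.trans b.2.1.symm)⟩, ⟨⟨[], rfl, h⟩⟩⟩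
  · have : IsEmpty {l : List α // l = [] ∧ P l} := ⟨fun ⟨l, hl, hp⟩ => h (hl ▸ hp)⟩
    exact Nat.card_of_isEmpty

end LengthCount

theorem DStep.sum_univ {M : Type*} [AddCommMonoid M] (f : DStep → M) :
    ∑ s, f s = f .up + f .down + f .right := by
  change ∑ s ∈ {.up, .down, .right}, f s = _
  simp [add_assoc]

noncomputable def ddpCount (n h : ℕ) : ℕ :=
  Nat.card {l : List DStep // l.length = n ∧ DStep.run h l = some 0}

noncomputable def plainCount (n : ℕ) (k : ℤ) : ℕ :=
  Nat.card {l : List DStep // l.length = n ∧ DStep.right ∉ l ∧ psum l = k}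

theorem ddpCount_zero (h : ℕ) : ddpCount 0 h = if h = 0 then 1 else 0 := by
  rw [ddpCount, List.natCard_length_zero]
  simp [DStep.run]

theorem ddpCount_succ_zero (n : ℕ) : ddpCount (n + 1) 0 = ddpCount n 1 + ddpCount n 0 := by
  simp [ddpCount, List.natCard_length_succ, DStep.sum_univ, DStep.run]

theorem ddpCount_succ_succ (n h : ℕ) :
    ddpCount (n + 1) (h + 1) = ddpCount n (h + 2) + ddpCount n h := by
  simp [ddpCount, List.natCard_length_succ, DStep.sum_univ, DStep.run]

theorem plainCount_zero (k : ℤ) : plainCount 0 k = if k = 0 then 1 else 0 := by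
  rw [plainCount, List.natCard_length_zero]
  simp [psum, eq_comm]

theorem plainCount_succ (n : ℕ) (k : ℤ) :
    plainCount (n + 1) k = plainCount n (k - 1) + plainCount n (k + 1) := by
  simp only [plainCount, List.natCard_length_succ, DStep.sum_univ, psum, List.mem_cons,
    reduceCtorEq, false_or, true_or, not_true, false_and, and_false, Nat.card_of_isEmpty,
    add_zero]
  exact congrArg₂ (· + ·)
    (List.natCard_length_congr n fun _ => and_congr_right fun _ => by omega)
    (List.natCard_length_congr n fun _ => and_congr_right fun _ => by omega)

theorem plainCount_neg (n : ℕ) (k : ℤ) : plainCount n (-k) = plainCount n k := by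
  induction n generalizing k with
  | zero => simp only [plainCount_zero, neg_eq_zero]
  | succ n ih =>
    rw [plainCount_succ, plainCount_succ, add_comm, ← ih (k - 1), ← ih (k + 1)]
    congr 2 <;> ring

theorem ddpCount_eq_plainCount (n h : ℕ) :
    ddpCount n h = plainCount n (-h - (n + h) % 2) := by
  induction n generalizing h with
  | zero =>
    rw [ddpCount_zero, plainCount_zero]
    split_ifs <;> omega
  | succ n ih =>
    rcases h with _ | h
    · rw [ddpCount_succ_zero, ih, ih, plainCount_succ]
      rcases Int.emod_two_eq_zero_or_one n with hn | hn
      · congr 2 <;> omega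
      · rw [← plainCount_neg n (_ + 1)]
        congr 2 <;> omega
    · rw [ddpCount_succ_succ, ih, ih, plainCount_succ]
      congr 2 <;> omega

/-- There is a bijection between dispersed Dyck paths of length `n` and plain paths
(only up and down steps) from `(0,0)` to `(n, -(n % 2))`. -/
theorem ddp_equiv_plainPaths (n : ℕ) :
    Nonempty ({l : List DStep // l.length = n ∧ IsDDP l} ≃
      {l : List DStep // l.length = n ∧ DStep.right ∉ l ∧ psum l = -((n : ℤ) % 2)}) := by
  refine Finite.card_eq.mp ?_
  change ddpCount n 0 = plainCount n _
  rw [ddpCount_eq_plainCount]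
  congr 1
  omega
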